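/- arXiv:2108.09580 — 6 statements merged into one kernel-verified Lean document; each statement's English description precedes it below -/
import Mathlib

section
/- An allocation rule q is ex-post implementable if and only if it is eventually monotone. -/
open Set

/-- The set of signal profiles: each agent `j`'s signal lies in `[a j, b j]`. -/
def Profiles (n : ℕ) (a b : Fin n → ℝ) : Set (Fin n → ℝ) :=
  {s | ∀ j, s j ∈ Set.Icc (a j) (b j)}

/-- Ex-post incentive compatibility of the mechanism `(q, p)`. -/
def EPIC (n : ℕ) (a b : Fin n → ℝ) (v q p : Fin n → (Fin n → ℝ) → ℝ) : Prop :=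
  ∀ i : Fin n, ∀ s ∈ Profiles n a b, ∀ si ∈ Set.Icc (a i) (b i), ∀ si' ∈ Set.Icc (a i) (b i),
    q i (Function.update s i si) * v i (Function.update s i si)
        - p i (Function.update s i si) ≥
      q i (Function.update s i si') * v i (Function.update s i si)
        - p i (Function.update s i si')

/-- `ℓ_{v_i}(s_{-i})`: the supremum of the set of own signals at which agent `i`'s value
coincides with her value at the lowest signal. -/
noncomputable def lowVal (n : ℕ) (a b : Fin n → ℝ) (v : Fin n → (Fin n → ℝ) → ℝ)
    (i : Fin n) (s : Fin n → ℝ) : ℝ :=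
  sSup {x | x ∈ Set.Icc (a i) (b i) ∧
    v i (Function.update s i x) = v i (Function.update s i (a i))}

/-- Eventual monotonicity of the allocation rule `q`. -/
noncomputable def EventuallyMonotone (n : ℕ) (a b : Fin n → ℝ)
    (v q : Fin n → (Fin n → ℝ) → ℝ) : Prop :=
  ∀ i : Fin n, ∀ s ∈ Profiles n a b, ∀ si ∈ Set.Icc (a i) (b i), ∀ si' ∈ Set.Icc (a i) (b i),
    si' < si → lowVal n a b v i s < si →
      q i (Function.update s i si') ≤ q i (Function.update s i si)

/- ### Auxiliary lemmas -/

lemma upd_mem_profiles {n : ℕ} {a b : Fin n → ℝ} {s : Fin n → ℝ}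
    (hs : s ∈ Profiles n a b) {i : Fin n} {x : ℝ} (hx : x ∈ Set.Icc (a i) (b i)) :
    Function.update s i x ∈ Profiles n a b := by
  intro j
  rcases eq_or_ne j i with rfl | hj
  · simpa using hx
  · simpa [Function.update_of_ne hj] using hs j

lemma csSup_mem_level {f : ℝ → ℝ} {aa bb : ℝ} (hab : aa ≤ bb)
    (hcont : ContinuousOn f (Set.Icc aa bb)) :
    sSup {t | t ∈ Set.Icc aa bb ∧ f t = f aa} ∈ {t | t ∈ Set.Icc aa bb ∧ f t = f aa} := by
  have hne : ({t | t ∈ Set.Icc aa bb ∧ f t = f aa}).Nonempty :=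
    ⟨aa, ⟨le_refl _, hab⟩, rfl⟩
  have hclosed : IsClosed {t | t ∈ Set.Icc aa bb ∧ f t = f aa} := by
    have hset : {t | t ∈ Set.Icc aa bb ∧ f t = f aa} = Set.Icc aa bb ∩ f ⁻¹' {f aa} := by
      ext t
      simp only [Set.mem_setOf_eq, Set.mem_inter_iff, Set.mem_preimage, Set.mem_singleton_iff]
    rw [hset]
    exact hcont.preimage_isClosed_of_isClosed isClosed_Icc isClosed_singleton
  have hbdd : BddAbove {t | t ∈ Set.Icc aa bb ∧ f t = f aa} := ⟨bb, fun t ht => ht.1.2⟩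
  exact hclosed.csSup_mem hne hbdd

/-- If `x` lies below the level-set supremum, then `f x = f aa`. -/
lemma le_sup_level_eq {f : ℝ → ℝ} {aa bb x : ℝ}
    (hmono : MonotoneOn f (Set.Icc aa bb)) (hcont : ContinuousOn f (Set.Icc aa bb))
    (hx : x ∈ Set.Icc aa bb)
    (hle : x ≤ sSup {t | t ∈ Set.Icc aa bb ∧ f t = f aa}) : f x = f aa := by
  have hab : aa ≤ bb := hx.1.trans hx.2
  have hmem := csSup_mem_level hab hcont
  have h1 : f x ≤ f (sSup {t | t ∈ Set.Icc aa bb ∧ f t = f aa}) := hmono hx hmem.1 hle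
  have h2 : f aa ≤ f x := hmono ⟨le_refl _, hab⟩ hx hx.1
  exact le_antisymm (h1.trans_eq hmem.2) h2

/-- If `x` lies strictly above the level-set supremum, then `f aa < f x`. -/
lemma beyond_sup_gt {f : ℝ → ℝ} {aa bb x : ℝ}
    (hmono : MonotoneOn f (Set.Icc aa bb)) (hx : x ∈ Set.Icc aa bb)
    (hℓ : sSup {t | t ∈ Set.Icc aa bb ∧ f t = f aa} < x) :
    f aa < f x := by
  have hab : aa ≤ bb := hx.1.trans hx.2
  have hxT : x ∉ {t | t ∈ Set.Icc aa bb ∧ f t = f aa} := by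
    intro hmem
    exact absurd (le_csSup ⟨bb, fun t ht => ht.1.2⟩ hmem) (not_le.2 hℓ)
  have hle : f aa ≤ f x := hmono ⟨le_refl _, hab⟩ hx hx.1
  rcases hle.lt_or_eq with h | h
  · exact h
  · exact absurd ⟨hx, h.symm⟩ hxT

/-- Strict monotonicity beyond the flat region. -/
lemma strict_beyond {f : ℝ → ℝ} {aa bb x y : ℝ}
    (hconv : ConvexOn ℝ (Set.Icc aa bb) f)
    (hmono : MonotoneOn f (Set.Icc aa bb)) (hx : x ∈ Set.Icc aa bb) (hy : y ∈ Set.Icc aa bb)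
    (hyx : y < x) (hℓ : sSup {t | t ∈ Set.Icc aa bb ∧ f t = f aa} < x) :
    f y < f x := by
  have hab : aa ≤ bb := hx.1.trans hx.2
  have hfa : f aa < f x := beyond_sup_gt hmono hx hℓ
  rcases eq_or_lt_of_le hy.1 with h | h
  · rwa [← h]
  · have hxa : 0 < x - aa := by linarith
    have hlam0 : 0 < (x - y) / (x - aa) := div_pos (by linarith) hxa
    have hmu0 : 0 < (y - aa) / (x - aa) := div_pos (by linarith) hxa
    have hsum : (x - y) / (x - aa) + (y - aa) / (x - aa) = 1 := by field_simp; ring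
    have hcomb : ((x - y) / (x - aa)) • aa + ((y - aa) / (x - aa)) • x = y := by
      simp only [smul_eq_mul]; field_simp; ring
    have hkey := hconv.2 (Set.mem_Icc.2 ⟨le_refl _, hab⟩) hx hlam0.le hmu0.le hsum
    rw [hcomb] at hkey
    simp only [smul_eq_mul] at hkey
    have hmul := mul_lt_mul_of_pos_left hfa hlam0
    have hfact : (x - y) / (x - aa) * f x + (y - aa) / (x - aa) * f x = f x := by
      rw [← add_mul, hsum, one_mul]
    linarith [hkey, hmul, hfact]

/-- The monotone “quantile” extension of an allocation along values. -/
noncomputable def Qfun (f g : ℝ → ℝ) (aa bb : ℝ) (t : ℝ) : ℝ :=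
  sSup {r | ∃ x ∈ Set.Icc aa bb, f x ≤ t ∧ r = g x}

/-- Key one-dimensional inequality establishing ex-post incentive compatibility of the
payment rule constructed from an eventually monotone allocation rule. -/
lemma key_ineq (f g : ℝ → ℝ) (aa bb : ℝ) (hab : aa ≤ bb)
    (hmono : MonotoneOn f (Set.Icc aa bb))
    (hcont : ContinuousOn f (Set.Icc aa bb))
    (hg : ∀ x ∈ Set.Icc aa bb, g x ∈ Set.Icc (0 : ℝ) 1)
    (hEM : ∀ x ∈ Set.Icc aa bb, ∀ y ∈ Set.Icc aa bb, y < x →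
      sSup {t | t ∈ Set.Icc aa bb ∧ f t = f aa} < x → g y ≤ g x)
    (x y : ℝ) (hx : x ∈ Set.Icc aa bb) (hy : y ∈ Set.Icc aa bb) :
    g x * f x - (g x * f x - ∫ t in (f aa)..(f x), Qfun f g aa bb t) ≥
      g y * f x - (g y * f y - ∫ t in (f aa)..(f y), Qfun f g aa bb t) := by
  set A := f aa with hA
  set Q := Qfun f g aa bb with hQ
  have hbddS : ∀ t, BddAbove {r | ∃ z ∈ Set.Icc aa bb, f z ≤ t ∧ r = g z} := by
    intro t
    refine ⟨1, ?_⟩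
    rintro r ⟨z, hz, _, rfl⟩
    exact (hg z hz).2
  have hneS : ∀ t, A ≤ t → ({r | ∃ z ∈ Set.Icc aa bb, f z ≤ t ∧ r = g z}).Nonempty := by
    intro t ht
    exact ⟨g aa, aa, ⟨le_refl _, hab⟩, ht, rfl⟩
  have monoQ : MonotoneOn Q (Set.Ici A) := by
    intro t1 ht1 t2 _ h12
    exact csSup_le_csSup (hbddS t2) (hneS t1 ht1)
      (fun r hr => by obtain ⟨z, hz, hfz, hrz⟩ := hr; exact ⟨z, hz, hfz.trans h12, hrz⟩)
  have hAw : A ≤ f x := hmono ⟨le_refl _, hab⟩ hx hx.1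
  have hAw' : A ≤ f y := hmono ⟨le_refl _, hab⟩ hy hy.1
  have intQ : ∀ u1 u2 : ℝ, A ≤ u1 → A ≤ u2 → IntervalIntegrable Q MeasureTheory.volume u1 u2 := by
    intro u1 u2 h1 h2
    refine (monoQ.mono ?_).intervalIntegrable
    intro t ht
    exact (le_inf h1 h2).trans ht.1
  have c_le : g y ≤ Q (f y) := le_csSup (hbddS (f y)) ⟨y, hy, le_refl _, rfl⟩
  have hQle : ∀ t, t < f y → Q t ≤ g y := by
    intro t ht
    refine Real.sSup_le ?_ (hg y hy).1
    rintro r ⟨z, hz, hfz, rfl⟩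
    have hfz_lt : f z < f y := lt_of_le_of_lt hfz ht
    have hzy : z < y := by
      by_contra hc
      push_neg at hc
      exact absurd (hmono hy hz hc) (not_le.2 hfz_lt)
    have hfy_ne : f y ≠ A := by
      have haz : A ≤ f z := hmono ⟨le_refl _, hab⟩ hz hz.1
      intro he
      rw [he] at hfz_lt
      exact absurd haz (not_le.2 hfz_lt)
    have hsup_lt : sSup {t | t ∈ Set.Icc aa bb ∧ f t = f aa} < y := by
      by_contra hc
      push_neg at hc
      exact hfy_ne (le_sup_level_eq hmono hcont hy hc)
    exact hEM y hy z hz hzy hsup_lt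
  rcases le_total (f y) (f x) with h | h
  · -- upward deviation is from below: integral from f y to f x dominates g y * (f x - f y)
    have hsplit := intervalIntegral.integral_add_adjacent_intervals
      (intQ A (f y) le_rfl hAw') (intQ (f y) (f x) hAw' hAw)
    have hlow : g y * (f x - f y) ≤ ∫ t in (f y)..(f x), Q t := by
      have hmon := intervalIntegral.integral_mono_on h
        (intervalIntegrable_const (c := g y)) (intQ (f y) (f x) hAw' hAw)
        (fun t htt => c_le.trans (monoQ hAw' (hAw'.trans htt.1) htt.1))
      rw [intervalIntegral.integral_const, smul_eq_mul] at hmon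
      nlinarith [hmon]
    linarith [hsplit, hlow]
  · -- downward: integral from f x to f y is at most g y * (f y - f x)
    have hsplit := intervalIntegral.integral_add_adjacent_intervals
      (intQ A (f x) le_rfl hAw) (intQ (f x) (f y) hAw hAw')
    have hupp : (∫ t in (f x)..(f y), Q t) ≤ g y * (f y - f x) := by
      have hae : Q ≤ᵐ[MeasureTheory.volume.restrict (Set.Icc (f x) (f y))]
          (fun _ => g y) := by
        rw [Filter.EventuallyLE, MeasureTheory.ae_restrict_iff' measurableSet_Icc]
        rw [MeasureTheory.ae_iff]
        refine MeasureTheory.measure_mono_null ?_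
          (MeasureTheory.measure_singleton (f y))
        intro t ht
        simp only [Set.mem_setOf_eq, not_forall, not_le] at ht
        obtain ⟨htIcc, htQ⟩ := ht
        have hnlt : ¬ t < f y := fun hlt => absurd (hQle t hlt) (not_le.2 htQ)
        exact Set.mem_singleton_iff.2 (le_antisymm htIcc.2 (not_lt.1 hnlt))
      have hmon := intervalIntegral.integral_mono_ae_restrict h
        (intQ (f x) (f y) hAw hAw') (intervalIntegrable_const (c := g y)) hae
      rw [intervalIntegral.integral_const, smul_eq_mul] at hmon
      nlinarith [hmon]
    linarith [hsplit, hupp]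

/-- **Theorem 1.** An allocation rule `q` is ex-post implementable if and only if it is
eventually monotone. -/
theorem expost_implementable_iff_eventually_monotone
    (n : ℕ) (hn : 1 ≤ n)
    (a b : Fin n → ℝ) (hab : ∀ i, a i < b i)
    (v : Fin n → (Fin n → ℝ) → ℝ)
    (hvconv : ∀ i : Fin n, ∀ s ∈ Profiles n a b,
      ConvexOn ℝ (Set.Icc (a i) (b i)) (fun x => v i (Function.update s i x)))
    (hvcont : ∀ i : Fin n, ∀ s ∈ Profiles n a b,
      ContinuousOn (fun x => v i (Function.update s i x)) (Set.Icc (a i) (b i)))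
    (hvmono : ∀ i : Fin n, ∀ s ∈ Profiles n a b,
      MonotoneOn (fun x => v i (Function.update s i x)) (Set.Icc (a i) (b i)))
    (q : Fin n → (Fin n → ℝ) → ℝ)
    (hq : ∀ i : Fin n, ∀ s ∈ Profiles n a b, q i s ∈ Set.Icc (0 : ℝ) 1) :
    (∃ p : Fin n → (Fin n → ℝ) → ℝ, EPIC n a b v q p) ↔
      EventuallyMonotone n a b v q := by
  constructor
  · rintro ⟨p, hp⟩ i s hs si hsi si' hsi' hlt hℓ
    have h1 := hp i s hs si hsi si' hsi'
    have h2 := hp i s hs si' hsi' si hsi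
    have hℓ' : sSup {t | t ∈ Set.Icc (a i) (b i) ∧
        v i (Function.update s i t) = v i (Function.update s i (a i))} < si := hℓ
    have hvlt : v i (Function.update s i si') < v i (Function.update s i si) :=
      strict_beyond (f := fun x => v i (Function.update s i x))
        (hvconv i s hs) (hvmono i s hs) hsi hsi' hlt hℓ'
    nlinarith [h1, h2, hvlt]
  · intro hEM
    refine ⟨fun i s =>
      q i s * v i s -
        ∫ t in (v i (Function.update s i (a i)))..(v i s),
          Qfun (fun x => v i (Function.update s i x))
            (fun x => q i (Function.update s i x)) (a i) (b i) t, ?_⟩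
    intro i s hs si hsi si' hsi'
    simp only [Function.update_idem]
    exact key_ineq (fun x => v i (Function.update s i x))
      (fun x => q i (Function.update s i x)) (a i) (b i) (hab i).le
      (hvmono i s hs) (hvcont i s hs)
      (fun x hx => hq i (Function.update s i x) (upd_mem_profiles hs hx))
      (fun x hx y hy hyx hsup => hEM i s hs x hx y hy hyx hsup)
      si si' hsi hsi'
end

section
/- Suppose the allocation rule q is eventually monotone, and let g_i be subgradient selections for v_i such that x ↦ g_i(x, s_{-i}) q_i(x, s_{-i}) is integrable on S_i for each i and s_{-i}. Define the payment rule p by p_i(s_i, s_{-i}) = p_i(a_i, s_{-i}) − q_i(a_i, s_{-i}) v_i(a_i, s_{-i}) + q_i(s_i, s_{-i}) v_i(s_i, s_{-i}) − ∫_{a_i}^{s_i} g_i(x, s_{-i}) q_i(x, s_{-i}) dx (for an arbitrary choice of the functions s_{-i} ↦ p_i(a_i, s_{-i})). Then the mechanism (q, p) is ex-post incentive compatible. -/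
open Set MeasureTheory intervalIntegral

/-- A subgradient selection of a function is monotone. -/
lemma subgrad_monotoneOn {A B : ℝ} {f G : ℝ → ℝ}
    (hsub : ∀ x ∈ Icc A B, ∀ y ∈ Icc A B, f x + G x * (y - x) ≤ f y) :
    MonotoneOn G (Icc A B) := by
  intro x hx y hy hxy
  rcases eq_or_lt_of_le hxy with rfl | hlt
  · exact le_rfl
  · have h1 := hsub x hx y hy
    have h2 := hsub y hy x hx
    nlinarith [sub_pos.2 hlt]

/-- FTC for a measurable subgradient selection of a continuous convex function. -/
lemma integral_subgrad_eq {A B : ℝ} {f G : ℝ → ℝ}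
    (hf : ContinuousOn f (Icc A B)) (hconv : ConvexOn ℝ (Icc A B) f)
    (hsub : ∀ x ∈ Icc A B, ∀ y ∈ Icc A B, f x + G x * (y - x) ≤ f y)
    {c d : ℝ} (hc : c ∈ Icc A B) (hd : d ∈ Icc A B) (hcd : c ≤ d) :
    ∫ x in c..d, G x = f d - f c := by
  have hAB : A ≤ B := hc.1.trans hc.2
  have hmono : MonotoneOn G (Icc A B) := subgrad_monotoneOn hsub
  -- the right-derivative candidate
  set D : ℝ → ℝ := fun x => sInf (slope f x '' Ioo x B) with hD
  -- slopes from x are bounded below by G x and above by G u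
  have hGle : ∀ x ∈ Icc A B, x < B → ∀ u ∈ Ioo x B, G x ≤ slope f x u ∧ slope f x u ≤ G u := by
    intro x hx hxB u hu
    have hux : 0 < u - x := sub_pos.2 hu.1
    have huI : u ∈ Icc A B := ⟨hx.1.trans hu.1.le, hu.2.le⟩
    have h1 := hsub x hx u huI
    have h2 := hsub u huI x hx
    rw [slope_def_field]
    constructor
    · rw [le_div_iff₀ hux]; linarith
    · rw [div_le_iff₀ hux]; linarith
  have hDbounds : ∀ x ∈ Icc A B, x < B → G x ≤ D x ∧ ∀ u ∈ Ioo x B, D x ≤ G u := by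
    intro x hx hxB
    have hne : (Ioo x B).Nonempty := nonempty_Ioo.2 hxB
    have hbdd : BddBelow (slope f x '' Ioo x B) := by
      refine ⟨G x, ?_⟩
      rintro _ ⟨u, hu, rfl⟩
      exact (hGle x hx hxB u hu).1
    constructor
    · refine le_csInf (hne.image _) ?_
      rintro _ ⟨u, hu, rfl⟩
      exact (hGle x hx hxB u hu).1
    · intro u hu
      exact le_trans (csInf_le hbdd (mem_image_of_mem _ hu)) (hGle x hx hxB u hu).2
  -- D is the right derivative of f at interior points
  have hderiv : ∀ x ∈ Ioo A B, HasDerivWithinAt f (D x) (Ioi x) x := by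
    intro x hx
    have hxI : x ∈ Icc A B := ⟨hx.1.le, hx.2.le⟩
    have hne : (Ioo x B).Nonempty := nonempty_Ioo.2 hx.2
    have hmonoslope : MonotoneOn (slope f x) (Ioo x B) := by
      intro u hu u' hu' huu
      have huI : u ∈ Icc A B := ⟨hxI.1.trans hu.1.le, hu.2.le⟩
      have hu'I : u' ∈ Icc A B := ⟨hxI.1.trans hu'.1.le, hu'.2.le⟩
      rw [slope_def_field, slope_def_field]
      exact hconv.secant_mono hxI huI hu'I hu.1.ne' hu'.1.ne' huu
    have hbdd : BddBelow (slope f x '' Ioo x B) := by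
      refine ⟨G x, ?_⟩
      rintro _ ⟨u, hu, rfl⟩
      exact (hGle x hxI hx.2 u hu).1
    have htend := hmonoslope.tendsto_nhdsWithin_Ioo_right hne hbdd
    rw [hasDerivWithinAt_iff_tendsto_slope' (notMem_Ioi.2 le_rfl)]
    exact htend
  -- the clamped version of G, a monotone function on ℝ
  set Gc : ℝ → ℝ := fun x => G (max A (min x B)) with hGc
  have hclamp : ∀ x, max A (min x B) ∈ Icc A B :=
    fun x => ⟨le_max_left _ _, max_le hAB (min_le_right _ _)⟩
  have hGcmono : Monotone Gc := by
    intro x y hxy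
    exact hmono (hclamp x) (hclamp y) (max_le_max le_rfl (min_le_min hxy le_rfl))
  have hGceq : ∀ x ∈ Icc A B, Gc x = G x := by
    intro x hx
    simp only [hGc, min_eq_left hx.2, max_eq_right hx.1]
  -- D = G away from the (countable) discontinuity set of Gc
  have hDG : ∀ x ∈ Ioo A B, ContinuousAt Gc x → D x = G x := by
    intro x hx hcont
    have hxI : x ∈ Icc A B := ⟨hx.1.le, hx.2.le⟩
    refine le_antisymm ?_ (hDbounds x hxI hx.2).1
    by_contra hlt
    push_neg at hlt
    have hε : (0:ℝ) < D x - G x := sub_pos.2 hlt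
    have h1 : ∀ᶠ u in nhdsWithin x (Ioi x), Gc u < Gc x + (D x - G x) := by
      have := (hcont.tendsto.mono_left nhdsWithin_le_nhds :
        Filter.Tendsto Gc (nhdsWithin x (Ioi x)) (nhds (Gc x)))
      exact this.eventually_lt_const (by linarith)
    have h2 : ∀ᶠ u in nhdsWithin x (Ioi x), u ∈ Ioo x B :=
      Filter.eventually_of_mem (Ioo_mem_nhdsGT hx.2) fun _ h => h
    obtain ⟨u, hu1, hu2⟩ := (h1.and h2).exists
    have huI : u ∈ Icc A B := ⟨hxI.1.trans hu2.1.le, hu2.2.le⟩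
    have := (hDbounds x hxI hx.2).2 u hu2
    rw [hGceq u huI, hGceq x hxI] at hu1
    linarith
  have hNc : Set.Countable {x | ¬ContinuousAt Gc x} := hGcmono.countable_not_continuousAt
  -- a.e. equality of D and G on (c, d]
  have hnull : (volume : Measure ℝ) ({x | ¬ContinuousAt Gc x} ∪ {d}) = 0 :=
    measure_union_null (hNc.measure_zero _) (measure_singleton d)
  have hae : ∀ᵐ x ∂(volume : Measure ℝ), x ∈ Ioc c d → D x = G x := by
    filter_upwards [measure_eq_zero_iff_ae_notMem.mp hnull] with x hx hxI
    have hxd : x ≠ d := fun h => hx (Or.inr h)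
    have hxO : x ∈ Ioo A B :=
      ⟨hc.1.trans_lt hxI.1, lt_of_lt_of_le (lt_of_le_of_ne hxI.2 hxd) hd.2⟩
    exact hDG x hxO (not_not.mp fun h => hx (Or.inl h))
  have hGint : IntervalIntegrable G volume c d := by
    apply MonotoneOn.intervalIntegrable
    rw [uIcc_of_le hcd]
    exact hmono.mono (Icc_subset_Icc hc.1 hd.2)
  have haerestrict : G =ᵐ[(volume : Measure ℝ).restrict (Set.uIoc c d)] D := by
    rw [uIoc_of_le hcd]
    exact ((ae_restrict_iff' measurableSet_Ioc).2 hae).mono fun x h => h.symm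
  have hDint : IntervalIntegrable D volume c d := hGint.congr_ae haerestrict
  have hftc : ∫ x in c..d, D x = f d - f c :=
    integral_eq_sub_of_hasDeriv_right_of_le hcd
      (hf.mono (Icc_subset_Icc hc.1 hd.2))
      (fun x hx => hderiv x ⟨hc.1.trans_lt hx.1, hx.2.trans_le hd.2⟩) hDint
  rw [← hftc]
  apply intervalIntegral.integral_congr_ae
  rw [uIoc_of_le hcd]
  exact hae.mono fun x h hx => (h hx).symm

/-- The key inequality for EPIC. -/
lemma key_ineq_s2 {A B L : ℝ} {f G Q : ℝ → ℝ} (hAB : A ≤ B)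
    (hf : ContinuousOn f (Icc A B)) (hconv : ConvexOn ℝ (Icc A B) f)
    (hfmono : MonotoneOn f (Icc A B))
    (hsub : ∀ x ∈ Icc A B, ∀ y ∈ Icc A B, f x + G x * (y - x) ≤ f y)
    (hL : L = sSup {x | x ∈ Icc A B ∧ f x = f A})
    (hEM : ∀ x ∈ Icc A B, ∀ y ∈ Icc A B, y < x → L < x → Q y ≤ Q x)
    (hGQ : IntervalIntegrable (fun x => G x * Q x) volume A B)
    {si si' : ℝ} (hsi : si ∈ Icc A B) (hsi' : si' ∈ Icc A B) :
    Q si' * (f si - f si') ≤ ∫ x in si'..si, G x * Q x := by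
  have hmonoG : MonotoneOn G (Icc A B) := subgrad_monotoneOn hsub
  -- basic facts about L
  have hT : IsClosed {x | x ∈ Icc A B ∧ f x = f A} := by
    have : {x | x ∈ Icc A B ∧ f x = f A} = Icc A B ∩ f ⁻¹' {f A} := by
      ext x; simp [Set.mem_inter_iff, Set.mem_preimage]
    rw [this]
    exact hf.preimage_isClosed_of_isClosed isClosed_Icc isClosed_singleton
  have hLmem : L ∈ {x | x ∈ Icc A B ∧ f x = f A} := by
    rw [hL]
    exact hT.csSup_mem ⟨A, ⟨left_mem_Icc.2 hAB, rfl⟩⟩ ⟨B, fun x hx => hx.1.2⟩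
  have hLI : L ∈ Icc A B := hLmem.1
  have hAL : A ≤ L := by
    rw [hL]; exact le_csSup ⟨B, fun x hx => hx.1.2⟩ ⟨left_mem_Icc.2 hAB, rfl⟩
  have hflat : ∀ x ∈ Icc A L, f x = f A := by
    intro x hx
    have hxI : x ∈ Icc A B := ⟨hx.1, hx.2.trans hLI.2⟩
    refine le_antisymm ?_ (hfmono (left_mem_Icc.2 hAB) hxI hx.1)
    calc f x ≤ f L := hfmono hxI hLI hx.2
    _ = f A := hLmem.2
  have hG0 : ∀ x ∈ Ioo A L, G x = 0 := by
    intro x hx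
    have hxI : x ∈ Icc A B := ⟨hx.1.le, hx.2.le.trans hLI.2⟩
    have hfx : f x = f A := hflat x ⟨hx.1.le, hx.2.le⟩
    have h1 := hsub x hxI A (left_mem_Icc.2 hAB)
    have h2 := hsub x hxI L hLI
    rw [hfx] at h1 h2
    rw [hLmem.2] at h2
    nlinarith [sub_pos.2 hx.1, sub_pos.2 hx.2]
  have hGpos : ∀ x ∈ Ioo A B, 0 ≤ G x := by
    intro x hx
    have hxI : x ∈ Icc A B := ⟨hx.1.le, hx.2.le⟩
    have h1 := hsub x hxI A (left_mem_Icc.2 hAB)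
    nlinarith [sub_pos.2 hx.1, hfmono (left_mem_Icc.2 hAB) hxI hxI.1]
  -- vanishing of integrals over subsets of the flat region
  have hzero : ∀ u w : ℝ, A ≤ u → u ≤ w → w ≤ L →
      ∫ x in u..w, G x * Q x = 0 := by
    intro u w hAu huw hwL
    have h0 : ∀ᵐ x ∂(volume : Measure ℝ), x ≠ L :=
      (measure_eq_zero_iff_ae_notMem.mp (measure_singleton L)).mono fun x h => h
    have : ∫ x in u..w, G x * Q x = ∫ x in u..w, (0:ℝ) := by
      apply intervalIntegral.integral_congr_ae
      rw [uIoc_of_le huw]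
      filter_upwards [h0] with x hx hxI
      have hxL : x < L := lt_of_le_of_ne (hxI.2.trans hwL) hx
      rw [hG0 x ⟨hAu.trans_lt hxI.1, hxL⟩, zero_mul]
    simp [this]
  have hintsub : ∀ u w : ℝ, u ∈ Icc A B → w ∈ Icc A B →
      IntervalIntegrable (fun x => G x * Q x) volume u w := by
    intro u w hu hw
    apply hGQ.mono_set
    rw [uIcc_of_le hAB]
    exact uIcc_subset_Icc hu hw
  rcases le_total si' si with hord | hord
  · -- upward case
    rcases le_total si L with hcase | hcase
    · -- both in flat region
      have h1 : f si = f A := hflat si ⟨hsi.1, hcase⟩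
      have h2 : f si' = f A := hflat si' ⟨hsi'.1, hord.trans hcase⟩
      rw [hzero si' si hsi'.1 hord hcase, h1, h2]
      simp
    · -- si above L
      set m := max si' L with hm
      have hmI : m ∈ Icc A B := ⟨hsi'.1.trans (le_max_left _ _), max_le hsi'.2 hLI.2⟩
      have hsm : si' ≤ m := le_max_left _ _
      have hms : m ≤ si := max_le hord hcase
      have hLm : L ≤ m := le_max_right _ _
      have hi1 := hintsub si' m hsi' hmI
      have hi2 := hintsub m si hmI hsi
      have hGm : IntervalIntegrable G volume m si := by
        apply MonotoneOn.intervalIntegrable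
        rw [uIcc_of_le hms]
        exact hmonoG.mono (Icc_subset_Icc hmI.1 hsi.2)
      have hzero1 : ∫ x in si'..m, G x * Q x = 0 := by
        rcases le_total si' L with h | h
        · rw [hm, max_eq_right h]
          exact hzero si' L hsi'.1 h le_rfl
        · rw [hm, max_eq_left h]
          simp
      have hfm : f m = f si' := by
        rcases le_total si' L with h | h
        · rw [hm, max_eq_right h, hLmem.2, ← hflat si' ⟨hsi'.1, h⟩]
        · rw [hm, max_eq_left h]
      have hstep : Q si' * (f si - f m) ≤ ∫ x in m..si, G x * Q x := by
        have hptwise : ∀ᵐ x ∂(volume : Measure ℝ), x ∈ Icc m si →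
            Q si' * G x ≤ G x * Q x := by
          have h2 : ∀ᵐ x ∂(volume : Measure ℝ), x ∉ ({m, si} : Set ℝ) :=
            measure_eq_zero_iff_ae_notMem.mp
              (((Set.countable_singleton _).insert _).measure_zero _)
          filter_upwards [h2] with x hx hxI
          have hxm : m < x := lt_of_le_of_ne hxI.1 (fun h => hx (Or.inl h.symm))
          have hxs : x < si := lt_of_le_of_ne hxI.2 (fun h => hx (Or.inr h))
          have hxO : x ∈ Ioo A B := ⟨hmI.1.trans_lt hxm, hxs.trans_le hsi.2⟩
          have hQ : Q si' ≤ Q x :=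
            hEM x ⟨hxO.1.le, hxO.2.le⟩ si' hsi' (hsm.trans_lt hxm) (hLm.trans_lt hxm)
          rw [mul_comm (G x) (Q x)]
          exact mul_le_mul_of_nonneg_right hQ (hGpos x hxO)
        have := intervalIntegral.integral_mono_ae_restrict hms
          (hGm.const_mul (Q si')) hi2
          ((ae_restrict_iff' measurableSet_Icc).2 hptwise)
        rwa [intervalIntegral.integral_const_mul,
          integral_subgrad_eq hf hconv hsub hmI hsi hms] at this
      have hadd := intervalIntegral.integral_add_adjacent_intervals hi1 hi2
      rw [hfm] at hstep
      rw [← hadd, hzero1]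
      linarith
  · -- downward case
    have hsym : ∫ x in si'..si, G x * Q x = - ∫ x in si..si', G x * Q x :=
      intervalIntegral.integral_symm _ _
    rcases le_or_gt si' L with hcase | hcase
    · have h1 : f si' = f A := hflat si' ⟨hsi'.1, hcase⟩
      have h2 : f si = f A := hflat si ⟨hsi.1, hord.trans hcase⟩
      rw [hsym, hzero si si' hsi.1 hord hcase, h1, h2]
      simp
    · set m := max si L with hm
      have hmI : m ∈ Icc A B := ⟨hsi.1.trans (le_max_left _ _), max_le hsi.2 hLI.2⟩
      have hsm : si ≤ m := le_max_left _ _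
      have hms : m ≤ si' := max_le hord hcase.le
      have hLm : L ≤ m := le_max_right _ _
      have hi1 := hintsub si m hsi hmI
      have hi2 := hintsub m si' hmI hsi'
      have hGm : IntervalIntegrable G volume m si' := by
        apply MonotoneOn.intervalIntegrable
        rw [uIcc_of_le hms]
        exact hmonoG.mono (Icc_subset_Icc hmI.1 hsi'.2)
      have hzero1 : ∫ x in si..m, G x * Q x = 0 := by
        rcases le_total si L with h | h
        · rw [hm, max_eq_right h]
          exact hzero si L hsi.1 h le_rfl
        · rw [hm, max_eq_left h]
          simp
      have hfm : f m = f si := by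
        rcases le_total si L with h | h
        · rw [hm, max_eq_right h, hLmem.2, ← hflat si ⟨hsi.1, h⟩]
        · rw [hm, max_eq_left h]
      have hstep : ∫ x in m..si', G x * Q x ≤ Q si' * (f si' - f m) := by
        have hptwise : ∀ᵐ x ∂(volume : Measure ℝ), x ∈ Icc m si' →
            G x * Q x ≤ Q si' * G x := by
          have h2 : ∀ᵐ x ∂(volume : Measure ℝ), x ∉ ({m, si'} : Set ℝ) :=
            measure_eq_zero_iff_ae_notMem.mp
              (((Set.countable_singleton _).insert _).measure_zero _)
          filter_upwards [h2] with x hx hxI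
          have hxm : m < x := lt_of_le_of_ne hxI.1 (fun h => hx (Or.inl h.symm))
          have hxs : x < si' := lt_of_le_of_ne hxI.2 (fun h => hx (Or.inr h))
          have hxO : x ∈ Ioo A B := ⟨hmI.1.trans_lt hxm, hxs.trans_le hsi'.2⟩
          have hQ : Q x ≤ Q si' :=
            hEM si' hsi' x ⟨hxO.1.le, hxO.2.le⟩ hxs hcase
          rw [mul_comm (G x) (Q x)]
          exact mul_le_mul_of_nonneg_right hQ (hGpos x hxO)
        have := intervalIntegral.integral_mono_ae_restrict hms
          hi2 (hGm.const_mul (Q si'))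
          ((ae_restrict_iff' measurableSet_Icc).2 hptwise)
        rwa [intervalIntegral.integral_const_mul,
          integral_subgrad_eq hf hconv hsub hmI hsi' hms] at this
      have hadd := intervalIntegral.integral_add_adjacent_intervals hi1 hi2
      rw [hfm] at hstep
      rw [hsym, ← hadd, hzero1]
      have e1 : Q si' * (f si - f si') = Q si' * f si - Q si' * f si' :=
        mul_sub _ _ _
      have e2 : Q si' * (f si' - f si) = Q si' * f si' - Q si' * f si :=
        mul_sub _ _ _
      linarith

/-- If `q` is eventually monotone and `p` is given by the payment formula
(built from measurable subgradient selections `g_i` of the value functions,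
with the integrands integrable), then `(q, p)` is ex-post incentive compatible. -/
theorem eventually_monotone_payment_formula_implies_epic
    (n : ℕ) (hn : 1 ≤ n)
    (a b : Fin n → ℝ) (hab : ∀ i, a i < b i)
    (v : Fin n → (Fin n → ℝ) → ℝ)
    (hvconv : ∀ i : Fin n, ∀ s ∈ Profiles n a b,
      ConvexOn ℝ (Set.Icc (a i) (b i)) (fun x => v i (Function.update s i x)))
    (hvcont : ∀ i : Fin n, ∀ s ∈ Profiles n a b,
      ContinuousOn (fun x => v i (Function.update s i x)) (Set.Icc (a i) (b i)))
    (hvmono : ∀ i : Fin n, ∀ s ∈ Profiles n a b,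
      MonotoneOn (fun x => v i (Function.update s i x)) (Set.Icc (a i) (b i)))
    (q : Fin n → (Fin n → ℝ) → ℝ)
    (hq : ∀ i : Fin n, ∀ s ∈ Profiles n a b, q i s ∈ Set.Icc (0 : ℝ) 1)
    (hEM : EventuallyMonotone n a b v q)
    -- the subgradient selections `g i x s` (depending on `s` only through `s_{-i}`)
    (g : Fin n → ℝ → (Fin n → ℝ) → ℝ)
    (hgmeas : ∀ i : Fin n, ∀ s : Fin n → ℝ, Measurable (fun x => g i x s))
    (hgind : ∀ i : Fin n, ∀ x : ℝ, ∀ s : Fin n → ℝ, ∀ z : ℝ,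
      g i x (Function.update s i z) = g i x s)
    (hgsub : ∀ i : Fin n, ∀ s ∈ Profiles n a b,
      ∀ x ∈ Set.Icc (a i) (b i), ∀ y ∈ Set.Icc (a i) (b i),
        v i (Function.update s i y) ≥
          v i (Function.update s i x) + g i x s * (y - x))
    (hint : ∀ i : Fin n, ∀ s ∈ Profiles n a b,
      IntervalIntegrable (fun x => g i x s * q i (Function.update s i x))
        MeasureTheory.volume (a i) (b i))
    -- the payment rule `p` satisfies the payment formula on the profile space
    (p : Fin n → (Fin n → ℝ) → ℝ)
    (hp : ∀ i : Fin n, ∀ s ∈ Profiles n a b,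
      p i s = p i (Function.update s i (a i))
        - q i (Function.update s i (a i)) * v i (Function.update s i (a i))
        + q i s * v i s
        - ∫ x in (a i)..(s i), g i x s * q i (Function.update s i x)) :
    EPIC n a b v q p := by
  intro i s hs si hsi si' hsi'
  set A := a i with hA
  set B := b i with hB
  set f : ℝ → ℝ := fun x => v i (Function.update s i x) with hfdef
  set Q : ℝ → ℝ := fun x => q i (Function.update s i x) with hQdef
  set G : ℝ → ℝ := fun x => g i x s with hGdef
  have hupd : ∀ z ∈ Icc A B, Function.update s i z ∈ Profiles n a b := by
    intro z hz j
    rcases eq_or_ne j i with rfl | hji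
    · simpa using hz
    · simpa [Function.update_of_ne hji] using hs j
  have hsubf : ∀ x ∈ Icc A B, ∀ y ∈ Icc A B, f x + G x * (y - x) ≤ f y :=
    fun x hx y hy => hgsub i s hs x hx y hy
  have key : Q si' * (f si - f si') ≤ ∫ x in si'..si, G x * Q x := by
    refine key_ineq_s2 (hab i).le (hvcont i s hs) (hvconv i s hs) (hvmono i s hs)
      hsubf rfl ?_ (hint i s hs) hsi hsi'
    intro x hx y hy h1 h2
    exact hEM i s hs x hx y hy h1 h2
  set u := Function.update s i si with hu
  set u' := Function.update s i si' with hu'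
  have hmemu : u ∈ Profiles n a b := hupd si hsi
  have hmemu' : u' ∈ Profiles n a b := hupd si' hsi'
  have hpu : p i u = p i (Function.update s i A)
      - Q A * f A + Q si * f si - ∫ x in A..si, G x * Q x := by
    have h := hp i u hmemu
    simp only [hu, Function.update_idem, Function.update_self, hgind] at h
    exact h
  have hpu' : p i u' = p i (Function.update s i A)
      - Q A * f A + Q si' * f si' - ∫ x in A..si', G x * Q x := by
    have h := hp i u' hmemu'
    simp only [hu', Function.update_idem, Function.update_self, hgind] at h
    exact h
  have hintsub : ∀ c d : ℝ, c ∈ Icc A B → d ∈ Icc A B →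
      IntervalIntegrable (fun x => G x * Q x) volume c d := by
    intro c d hc hd
    apply (hint i s hs).mono_set
    rw [uIcc_of_le (hab i).le]
    exact uIcc_subset_Icc hc hd
  have hadd := intervalIntegral.integral_add_adjacent_intervals
    (hintsub A si' (left_mem_Icc.2 (hab i).le) hsi')
    (hintsub si' si hsi' hsi)
  show q i u * v i u - p i u ≥ q i u' * v i u - p i u'
  have hqu : q i u = Q si := rfl
  have hvu : v i u = f si := rfl
  have hqu' : q i u' = Q si' := rfl
  rw [hqu, hvu, hqu', hpu, hpu']
  have e : Q si' * (f si - f si') = Q si' * f si - Q si' * f si' := mul_sub _ _ _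
  linarith
end

section
/- Suppose (q, p) is incentive compatible. If t ∈ (a,b) is a point at which both u and v are differentiable, then u'(t) = v'(t) · q(t). -/
open Set

/-- If `(q, p)` is incentive compatible and both the net payoff `u = q·v − p` and the
value function `v` are differentiable at an interior point `t ∈ (a, b)`, then
`u'(t) = v'(t) · q(t)`. -/
theorem net_payoff_deriv
    (a b : ℝ) (hab : a < b) (v q p : ℝ → ℝ)
    (hvconv : ConvexOn ℝ (Set.Icc a b) v)
    (hvcont : ContinuousOn v (Set.Icc a b))
    (hvmono : MonotoneOn v (Set.Icc a b))
    (hq : ∀ s ∈ Set.Icc a b, q s ∈ Set.Icc (0 : ℝ) 1)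
    (hIC : ∀ s ∈ Set.Icc a b, ∀ s' ∈ Set.Icc a b,
      q s * v s - p s ≥ (q s' * v s' - p s') + (v s - v s') * q s')
    (t : ℝ) (ht : t ∈ Set.Ioo a b)
    (hu : DifferentiableAt ℝ (fun s => q s * v s - p s) t)
    (hv : DifferentiableAt ℝ v t) :
    deriv (fun s => q s * v s - p s) t = deriv v t * q t := by
  set g : ℝ → ℝ := fun s =>
    (q s * v s - p s) - ((q t * v t - p t) + (v s - v t) * q t) with hg
  have htmem : t ∈ Set.Icc a b := Set.mem_Icc_of_Ioo ht
  have hmin : IsLocalMin g t := by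
    have hnhds : Set.Ioo a b ∈ nhds t := Ioo_mem_nhds ht.1 ht.2
    refine Filter.eventually_of_mem hnhds fun s hs => ?_
    have := hIC s (Set.mem_Icc_of_Ioo hs) t htmem
    simp only [hg]
    linarith
  have hg2 : DifferentiableAt ℝ (fun s => (q t * v t - p t) + (v s - v t) * q t) t :=
    (differentiableAt_const _).add (((hv.sub_const _).mul_const _))
  have hgd : DifferentiableAt ℝ g t := hu.sub hg2
  have h0 : deriv g t = 0 := hmin.deriv_eq_zero
  have h1 : deriv g t = deriv (fun s => q s * v s - p s) t - deriv v t * q t := by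
    rw [hg, deriv_fun_sub hu hg2, deriv_const_add, deriv_mul_const (hv.sub_const _),
      deriv_sub_const]
  linarith [h1 ▸ h0]
end

section
/- Suppose (q, p) is incentive compatible and q is Lebesgue measurable. Then for every Lebesgue-measurable subgradient selection g of v (i.e., g : [a,b] → ℝ measurable with v(y) ≥ v(x) + g(x)(y − x) for all x, y ∈ [a,b]), one has for all s ∈ [a,b]: u(s) = u(a) + ∫_a^s g(x) q(x) dx; equivalently, p(s) = p(a) − q(a) v(a) + q(s) v(s) − ∫_a^s g(x) q(x) dx. -/
open Set MeasureTheory intervalIntegral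

/-- Suppose `(q, p)` is incentive compatible and `q` is measurable. Then for every
measurable subgradient selection `g` of `v` one has, for all `s ∈ [a, b]`,
`u(s) = u(a) + ∫_a^s g(x) q(x) dx`, or equivalently
`p(s) = p(a) − q(a) v(a) + q(s) v(s) − ∫_a^s g(x) q(x) dx`. -/
theorem net_payoff_envelope
    (a b : ℝ) (hab : a < b) (v q p : ℝ → ℝ)
    (hvconv : ConvexOn ℝ (Set.Icc a b) v)
    (hvcont : ContinuousOn v (Set.Icc a b))
    (hvmono : MonotoneOn v (Set.Icc a b))
    (hq : ∀ s ∈ Set.Icc a b, q s ∈ Set.Icc (0 : ℝ) 1)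
    (hqmeas : Measurable q)
    (hIC : ∀ s ∈ Set.Icc a b, ∀ s' ∈ Set.Icc a b,
      q s * v s - p s ≥ (q s' * v s' - p s') + (v s - v s') * q s')
    (g : ℝ → ℝ) (hgmeas : Measurable g)
    (hgsub : ∀ x ∈ Set.Icc a b, ∀ y ∈ Set.Icc a b, v y ≥ v x + g x * (y - x)) :
    ∀ s ∈ Set.Icc a b,
      (q s * v s - p s = (q a * v a - p a) + ∫ x in a..s, g x * q x) ∧
      p s = p a - q a * v a + q s * v s - ∫ x in a..s, g x * q x := by
  intro s hs
  obtain ⟨has, hsb⟩ := hs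
  have ha : a ∈ Set.Icc a b := ⟨le_refl a, le_of_lt hab⟩
  set u : ℝ → ℝ := fun t => q t * v t - p t with hu
  set h : ℝ → ℝ := fun t => g t * q t with hh
  -- key two-sided bound
  have key : ∀ x ∈ Set.Icc a b, ∀ y ∈ Set.Icc a b, x ≤ y →
      h x * (y - x) ≤ u y - u x ∧ u y - u x ≤ h y * (y - x) := by
    intro x hx y hy hxy
    have hq0x := (hq x hx).1
    have hq0y := (hq y hy).1
    have h1 : g x * (y - x) ≤ v y - v x := by have := hgsub x hx y hy; linarith
    have h2 : v y - v x ≤ g y * (y - x) := by have := hgsub y hy x hx; nlinarith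
    have h3 : (v y - v x) * q x ≤ u y - u x := by
      have := hIC y hy x hx; simp only [hu]; linarith
    have h4 : u y - u x ≤ (v y - v x) * q y := by
      have := hIC x hx y hy; simp only [hu]; linarith
    constructor
    · calc h x * (y - x) = q x * (g x * (y - x)) := by simp only [hh]; ring
        _ ≤ q x * (v y - v x) := mul_le_mul_of_nonneg_left h1 hq0x
        _ = (v y - v x) * q x := by ring
        _ ≤ u y - u x := h3
    · calc u y - u x ≤ (v y - v x) * q y := h4
        _ = q y * (v y - v x) := by ring
        _ ≤ q y * (g y * (y - x)) := mul_le_mul_of_nonneg_left h2 hq0y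
        _ = h y * (y - x) := by simp only [hh]; ring
  have hmono : MonotoneOn h (Set.Icc a b) := by
    intro x hx y hy hxy
    rcases eq_or_lt_of_le hxy with rfl | hlt
    · exact le_refl _
    · have k1 := (key x hx y hy hxy).1
      have k2 := (key x hx y hy hxy).2
      exact le_of_mul_le_mul_right (le_trans k1 k2) (sub_pos.mpr hlt)
  have hint : ∀ x ∈ Set.Icc a b, ∀ y ∈ Set.Icc a b, x ≤ y →
      IntervalIntegrable h volume x y := by
    intro x hx y hy hxy
    apply MonotoneOn.intervalIntegrable
    apply hmono.mono
    rw [Set.uIcc_of_le hxy]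
    exact Set.Icc_subset_Icc hx.1 hy.2
  -- two-sided bound on the integral
  have keyI : ∀ x ∈ Set.Icc a b, ∀ y ∈ Set.Icc a b, x ≤ y →
      h x * (y - x) ≤ (∫ t in x..y, h t) ∧ (∫ t in x..y, h t) ≤ h y * (y - x) := by
    intro x hx y hy hxy
    have hsub : Set.Icc x y ⊆ Set.Icc a b := Set.Icc_subset_Icc hx.1 hy.2
    constructor
    · have : (∫ t in x..y, h x) ≤ ∫ t in x..y, h t := by
        apply intervalIntegral.integral_mono_on hxy (intervalIntegrable_const)
          (hint x hx y hy hxy)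
        intro t ht
        exact hmono hx (hsub ht) ht.1
      calc h x * (y - x) = ∫ t in x..y, (fun _ => h x) t := by
            rw [intervalIntegral.integral_const, smul_eq_mul, mul_comm]
        _ ≤ _ := this
    · have : (∫ t in x..y, h t) ≤ ∫ t in x..y, h y := by
        apply intervalIntegral.integral_mono_on hxy (hint x hx y hy hxy)
          (intervalIntegrable_const)
        intro t ht
        exact hmono (hsub ht) hy ht.2
      calc (∫ t in x..y, h t) ≤ ∫ t in x..y, (fun _ => h y) t := this
        _ = h y * (y - x) := by rw [intervalIntegral.integral_const, smul_eq_mul, mul_comm]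
  -- per-interval bound
  have perI : ∀ x ∈ Set.Icc a b, ∀ y ∈ Set.Icc a b, x ≤ y →
      |u y - u x - ∫ t in x..y, h t| ≤ (h y - h x) * (y - x) := by
    intro x hx y hy hxy
    have k := key x hx y hy hxy
    have kI := keyI x hx y hy hxy
    rw [abs_le]
    constructor <;> nlinarith [k.1, k.2, kI.1, kI.2]
  -- main squeeze
  have hmain : u s - u a - (∫ t in a..s, h t) = 0 := by
    have hC : ∀ n : ℕ, |u s - u a - ∫ t in a..s, h t| ≤ (h s - h a) * (s - a) / (n + 1) := by
      intro n
      set N : ℕ := n + 1 with hN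
      have hNpos : (0:ℝ) < N := by positivity
      set δ : ℝ := (s - a) / N with hδ
      have hδ0 : 0 ≤ δ := by
        apply div_nonneg (by linarith) (le_of_lt hNpos)
      set X : ℕ → ℝ := fun i => a + i * δ with hX
      have hXmono : ∀ i : ℕ, X i ≤ X (i + 1) := by
        intro i
        simp only [hX]
        push_cast
        nlinarith
      have hXmem : ∀ i : ℕ, i ≤ N → X i ∈ Set.Icc a b := by
        intro i hi
        constructor
        · simp only [hX]
          have : (0:ℝ) ≤ (i:ℝ) := Nat.cast_nonneg i
          nlinarith
        · have : X i ≤ X N := by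
            simp only [hX]
            have : (i:ℝ) ≤ N := by exact_mod_cast hi
            nlinarith
          have hXN : X N = s := by
            simp only [hX, hδ]
            field_simp
            ring
          rw [hXN] at this
          linarith
      have hXN : X N = s := by
        simp only [hX, hδ]; field_simp; ring
      have hX0 : X 0 = a := by simp [hX]
      set f : ℕ → ℝ := fun i => u (X i) - ∫ t in a..X i, h t with hf
      have hmem : ∀ i : ℕ, i ≤ N → X i ∈ Set.Icc a b := hXmem
      have hstep : ∀ i : ℕ, i < N → |f (i+1) - f i| ≤ (h (X (i+1)) - h (X i)) * δ := by
        intro i hi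
        have hxi := hmem i (le_of_lt hi)
        have hxi1 := hmem (i+1) hi
        have hadj : (∫ t in a..X i, h t) + (∫ t in X i..X (i+1), h t)
            = ∫ t in a..X (i+1), h t := by
          apply intervalIntegral.integral_add_adjacent_intervals
          · exact hint a ha (X i) hxi (hxi.1)
          · exact hint (X i) hxi (X (i+1)) hxi1 (hXmono i)
        have : f (i+1) - f i = u (X (i+1)) - u (X i) - ∫ t in X i..X (i+1), h t := by
          simp only [hf]
          linarith [hadj]
        rw [this]
        have hbd := perI (X i) hxi (X (i+1)) hxi1 (hXmono i)
        have hdiff : X (i+1) - X i = δ := by simp only [hX]; push_cast; ring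
        rw [hdiff] at hbd
        exact hbd
      have htel : f N - f 0 = ∑ i ∈ Finset.range N, (f (i+1) - f i) := by
        rw [Finset.sum_range_sub]
      have hsum : |f N - f 0| ≤ ∑ i ∈ Finset.range N, (h (X (i+1)) - h (X i)) * δ := by
        rw [htel]
        refine le_trans (Finset.abs_sum_le_sum_abs _ _) ?_
        apply Finset.sum_le_sum
        intro i hi
        exact hstep i (Finset.mem_range.mp hi)
      have hsum2 : ∑ i ∈ Finset.range N, (h (X (i+1)) - h (X i)) * δ
          = (h s - h a) * δ := by
        rw [← Finset.sum_mul, Finset.sum_range_sub (fun i => h (X i)), hXN, hX0]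
      have hfN : f N - f 0 = u s - u a - ∫ t in a..s, h t := by
        simp only [hf, hXN, hX0, intervalIntegral.integral_same]
        ring
      rw [hfN] at hsum
      rw [hsum2] at hsum
      calc |u s - u a - ∫ t in a..s, h t| ≤ (h s - h a) * δ := hsum
        _ = (h s - h a) * (s - a) / (n + 1) := by
          simp only [hδ, hN]
          push_cast
          ring
    -- conclude via limit
    have htend : Filter.Tendsto (fun n : ℕ => (h s - h a) * (s - a) / (n + 1))
        Filter.atTop (nhds 0) := by
      have := tendsto_const_div_atTop_nhds_zero_nat ((h s - h a) * (s - a))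
      have h2 := this.comp (Filter.tendsto_add_atTop_nat 1)
      have h3 : (fun n : ℕ => (h s - h a) * (s - a) / (n + 1))
          = (fun n : ℕ => (h s - h a) * (s - a) / ((n + 1 : ℕ) : ℝ)) := by
        funext n; push_cast; ring
      rw [h3]; exact h2
    have habs : |u s - u a - ∫ t in a..s, h t| ≤ 0 :=
      ge_of_tendsto htend (Filter.Eventually.of_forall hC)
    have := abs_nonneg (u s - u a - ∫ t in a..s, h t)
    have : |u s - u a - ∫ t in a..s, h t| = 0 := le_antisymm habs this
    exact abs_eq_zero.mp this
  constructor
  · have : u s = u a + ∫ t in a..s, h t := by linarith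
    simpa [hu, hh] using this
  · have : u s = u a + ∫ t in a..s, h t := by linarith
    simp only [hu, hh] at this
    linarith [this]
end

section
/- Assume the adjusted hazard rates h_i(s) := c_i (1 − F(s_i))/f(s_i) where t ↦ (1 − F(t))/f(t) is nonincreasing on [a,b] (monotone hazard rate). Define the virtual values J_i(s) := Σ_j c_j s_j − h_i(s). Let i*(s) be the smallest index i minimizing h_i(s), and define the allocation rule q* by q*_i(s) = 1 if i = i*(s) and J_{i*(s)}(s) ≥ 0, and q*_i(s) = 0 otherwise. Then: (i) for every agent i and every s_{-i}, the map s_i ↦ q*_i(s_i, s_{-i}) is nondecreasing on [a,b]; and (ii) for every s ∈ [a,b]^n and every vector (x_1, …, x_n) with x_i ∈ [0,1] and Σ_i x_i ≤ 1, one has Σ_i J_i(s) q*_i(s) ≥ Σ_i J_i(s) x_i. -/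
open Set MeasureTheory intervalIntegral

/-- The adjusted hazard rate `c · (1 − F(t))/f(t)` where `F(t) = ∫_a^t f`. -/
noncomputable def adjHaz (a : ℝ) (f : ℝ → ℝ) (c t : ℝ) : ℝ :=
  c * ((1 - ∫ x in a..t, f x) / f t)

/-- The virtual value in the additive-signals model `v_i(s) = ∑_j c_j s_j`. -/
noncomputable def virtJ (n : ℕ) (a : ℝ) (f : ℝ → ℝ) (c : Fin n → ℝ)
    (i : Fin n) (s : Fin n → ℝ) : ℝ :=
  (∑ j, c j * s j) - adjHaz a f (c i) (s i)

/-- **Additive signals.** Under the monotone hazard rate assumption, the rule `q*` that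
gives the object to the smallest-index agent `i*(s)` minimizing the adjusted hazard rate
(provided her virtual value is nonnegative, and withholding the object otherwise) is
(i) nondecreasing in each agent's own signal, and (ii) pointwise maximizes the virtual
surplus `∑_i J_i(s) q_i(s)` among feasible allocations. -/
theorem additive_signals_optimal_rule
    (n : ℕ) (hn : 1 ≤ n) (a b : ℝ) (hab : a < b)
    (c : Fin n → ℝ) (hc : ∀ i, 0 ≤ c i)
    (f : ℝ → ℝ) (hfcont : ContinuousOn f (Set.Icc a b))
    (hfpos : ∀ t ∈ Set.Icc a b, 0 < f t)
    (hF1 : (∫ x in a..b, f x) = 1)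
    -- monotone hazard rate: `t ↦ (1 − F(t))/f(t)` is nonincreasing on `[a, b]`
    (hhaz : AntitoneOn (fun t => (1 - ∫ x in a..t, f x) / f t) (Set.Icc a b))
    -- `i*(s)` is the smallest index minimizing the adjusted hazard rate at `s`
    (istar : (Fin n → ℝ) → Fin n)
    (histar_min : ∀ s, (∀ j, s j ∈ Set.Icc a b) →
      ∀ j : Fin n, adjHaz a f (c (istar s)) (s (istar s)) ≤ adjHaz a f (c j) (s j))
    (histar_least : ∀ s, (∀ j, s j ∈ Set.Icc a b) →
      ∀ j : Fin n, (∀ k : Fin n, adjHaz a f (c j) (s j) ≤ adjHaz a f (c k) (s k)) →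
        istar s ≤ j)
    -- the candidate optimal allocation rule `q*`
    (qstar : Fin n → (Fin n → ℝ) → ℝ)
    (hqstar : ∀ i : Fin n, ∀ s : Fin n → ℝ,
      qstar i s = if i = istar s ∧ 0 ≤ virtJ n a f c (istar s) s then 1 else 0) :
    (∀ i : Fin n, ∀ s : Fin n → ℝ, (∀ j, s j ∈ Set.Icc a b) →
      MonotoneOn (fun x => qstar i (Function.update s i x)) (Set.Icc a b)) ∧
    (∀ s : Fin n → ℝ, (∀ j, s j ∈ Set.Icc a b) →
      ∀ x : Fin n → ℝ, (∀ i, x i ∈ Set.Icc (0 : ℝ) 1) → (∑ i, x i) ≤ 1 →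
        (∑ i, virtJ n a f c i s * x i) ≤ ∑ i, virtJ n a f c i s * qstar i s) := by
  constructor
  · -- monotonicity in own signal
    intro i s hs x hx y hy hxy
    set sx := Function.update s i x with hsxdef
    set sy := Function.update s i y with hsydef
    have hxi : sx i = x := Function.update_self i x s
    have hyi : sy i = y := Function.update_self i y s
    have hne : ∀ j, j ≠ i → sy j = sx j := by intro j hj; simp [hsxdef, hsydef, Function.update_of_ne hj]
    have hsx' : ∀ j, sx j ∈ Set.Icc a b := by
      intro j
      by_cases h : j = i
      · subst h; rw [hxi]; exact hx
      · rw [hsxdef, Function.update_of_ne h]; exact hs j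
    have hsy' : ∀ j, sy j ∈ Set.Icc a b := by
      intro j
      by_cases h : j = i
      · subst h; rw [hyi]; exact hy
      · rw [hsydef, Function.update_of_ne h]; exact hs j
    simp only [hqstar]
    by_cases hcond : i = istar sx ∧ 0 ≤ virtJ n a f c (istar sx) sx
    · obtain ⟨hieq, hJ⟩ := hcond
      have hhi : adjHaz a f (c i) y ≤ adjHaz a f (c i) x := by
        unfold adjHaz
        exact mul_le_mul_of_nonneg_left (hhaz hx hy hxy) (hc i)
      -- i minimizes at sx (restated)
      have hminx : ∀ j, adjHaz a f (c i) x ≤ adjHaz a f (c j) (sx j) := by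
        intro j
        have := histar_min sx hsx' j
        rwa [← hieq, hxi] at this
      -- i minimizes at sy
      have hminy : ∀ j, adjHaz a f (c i) (sy i) ≤ adjHaz a f (c j) (sy j) := by
        intro j
        by_cases hj : j = i
        · subst hj; exact le_refl _
        · rw [hyi, hne j hj]
          exact hhi.trans (hminx j)
      have h1 : istar sy ≤ i := histar_least sy hsy' i hminy
      have h2 : istar sy = i := by
        refine le_antisymm h1 ?_
        set j := istar sy with hjdef
        by_cases hj : j = i
        · exact le_of_eq hj.symm
        · -- j ≠ i minimizes at sy; show it also minimizes at sx
          have hjm := histar_min sy hsy'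
          have e1 : adjHaz a f (c j) (sx j) ≤ adjHaz a f (c i) y := by
            have := hjm i; rw [← hjdef, hyi, hne j hj] at this; exact this
          have hjminx : ∀ k, adjHaz a f (c j) (sx j) ≤ adjHaz a f (c k) (sx k) := by
            intro k
            by_cases hk : k = i
            · subst hk; rw [hxi]; exact e1.trans hhi
            · have := hjm k; rw [← hjdef, hne j hj, hne k hk] at this; exact this
          have := histar_least sx hsx' j hjminx
          rw [← hieq] at this; exact this
      -- virtual value at sy
      have hJy : 0 ≤ virtJ n a f c (istar sy) sy := by
        rw [h2]
        rw [← hieq] at hJ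
        unfold virtJ at hJ ⊢
        rw [hxi] at hJ; rw [hyi]
        have hsum : (∑ k, c k * sx k) ≤ ∑ k, c k * sy k := by
          apply Finset.sum_le_sum
          intro k _
          by_cases hk : k = i
          · subst hk; rw [hxi, hyi]; exact mul_le_mul_of_nonneg_left hxy (hc k)
          · rw [hne k hk]
        linarith
      rw [if_pos ⟨hieq, hJ⟩, if_pos ⟨h2.symm, hJy⟩]
    · rw [if_neg hcond]
      split_ifs <;> norm_num
  · -- pointwise virtual-surplus maximization
    intro s hs x hx hsum
    have hmax : ∀ i, virtJ n a f c i s ≤ virtJ n a f c (istar s) s := by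
      intro i
      have := histar_min s hs i
      unfold virtJ
      linarith
    set J := virtJ n a f c (istar s) s with hJdef
    have hRHS : (∑ i, virtJ n a f c i s * qstar i s) = max J 0 := by
      simp only [hqstar]
      rw [Finset.sum_eq_single (istar s)]
      · by_cases h : 0 ≤ J
        · rw [if_pos ⟨rfl, h⟩, mul_one, max_eq_left h]
        · rw [if_neg (by tauto), mul_zero, max_eq_right (le_of_not_ge h)]
      · intro j _ hj
        rw [if_neg (by tauto), mul_zero]
      · intro h; exact absurd (Finset.mem_univ _) h
    rw [hRHS]
    calc (∑ i, virtJ n a f c i s * x i)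
        ≤ ∑ i, max J 0 * x i := by
          apply Finset.sum_le_sum
          intro i _
          exact mul_le_mul_of_nonneg_right ((hmax i).trans (le_max_left _ _)) (hx i).1
      _ = max J 0 * ∑ i, x i := by rw [Finset.mul_sum]
      _ ≤ max J 0 * 1 := mul_le_mul_of_nonneg_left hsum (le_max_right _ _)
      _ = max J 0 := mul_one _
end

section
/- Let n ≥ 2, let f be a continuous nonnegative density on [a,b] with F(t) := ∫_a^t f(x) dx and F(b) = 1. Then ∫_{[a,b]^n} ( Σ_{i=1}^n max_{j ≠ i} s_j ) Π_{j=1}^n f(s_j) ds = n(n−1) ∫_a^b t F(t)^{n−2} f(t) dt. Equivalently, since Σ_i max_{j ≠ i} s_j = (n−1)·(highest value of s) + (second-highest value of s), the expectation of ((n−1)/n)·(highest signal) + (1/n)·(second-highest signal) under n i.i.d. draws from f equals (n−1) ∫_a^b t F(t)^{n−2} f(t) dt. -/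
open Set MeasureTheory intervalIntegral

lemma continuous_pi_ciSup {ι : Type*} [Fintype ι] [Nonempty ι] :
    Continuous (fun s : ι → ℝ => ⨆ j, s j) := by
  have h : (fun s : ι → ℝ => ⨆ j, s j)
      = fun s : ι → ℝ => Finset.univ.sup' Finset.univ_nonempty (fun j => s j) := by
    funext s
    rw [Finset.sup'_univ_eq_ciSup]
  rw [h]
  exact Continuous.finset_sup'_apply Finset.univ_nonempty fun i _ => continuous_apply i

lemma ciSup_fin_succ {k : ℕ} (s : Fin (k + 2) → ℝ) :
    (⨆ j, s j) = max (s 0) (⨆ j : Fin (k + 1), s j.succ) := by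
  have hbdd : BddAbove (Set.range s) := (Set.finite_range s).bddAbove
  have hbdd' : BddAbove (Set.range fun j : Fin (k + 1) => s j.succ) :=
    (Set.finite_range _).bddAbove
  apply le_antisymm
  · refine ciSup_le fun j => ?_
    refine Fin.cases ?_ (fun k' => ?_) j
    · exact le_max_left _ _
    · exact (le_ciSup hbdd' k').trans (le_max_right _ _)
  · exact max_le (le_ciSup hbdd 0) (ciSup_le fun j => le_ciSup hbdd j.succ)

/-- Distribution of the maximum of `m + 1` i.i.d. draws with continuous density `f`. -/
lemma max_density (f : ℝ → ℝ) (hf : Continuous f) (a b : ℝ) (hab : a ≤ b) :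
    ∀ m : ℕ, ∀ g : ℝ → ℝ, Continuous g →
    (∫ s in Set.pi Set.univ (fun _ : Fin (m + 1) => Set.Icc a b),
        g (⨆ j, s j) * ∏ j, f (s j)) =
      ∫ t in a..b, g t * (((m : ℝ) + 1) * (∫ x in a..t, f x) ^ m * f t) := by
  intro m
  induction m with
  | zero =>
    intro g hg
    have hmp := MeasureTheory.volume_preserving_funUnique (Fin 1) ℝ
    set u := MeasurableEquiv.funUnique (Fin 1) ℝ with hu
    have hpre : Set.pi Set.univ (fun _ : Fin 1 => Set.Icc a b) = u ⁻¹' (Set.Icc a b) := by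
      ext s
      simp [u, MeasurableEquiv.funUnique, Set.mem_pi, Pi.le_def, Unique.forall_iff,
        Fin.default_eq_zero]
    have heq : ∀ s : Fin 1 → ℝ, g (⨆ j, s j) * ∏ j, f (s j) = g (u s) * f (u s) := by
      intro s
      simp [u, MeasurableEquiv.funUnique, ciSup_unique]
    rw [hpre]
    rw [integral_congr_ae (Filter.Eventually.of_forall fun s => heq s)]
    erw [hmp.setIntegral_preimage_emb u.measurableEmbedding (fun t => g t * f t) (Set.Icc a b)]
    rw [intervalIntegral.integral_of_le hab, ← MeasureTheory.integral_Icc_eq_integral_Ioc]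
    apply setIntegral_congr_fun measurableSet_Icc
    intro t _
    simp
  | succ m ih =>
    intro g hg
    have hcast : ((m + 1 : ℕ) : ℝ) + 1 = (m : ℝ) + 2 := by push_cast; ring
    simp only [hcast]
    -- notation
    set F : ℝ → ℝ := fun t => ∫ x in a..t, f x with hFdef
    have hFderiv : ∀ x : ℝ, HasDerivAt F (f x) x := fun x =>
      intervalIntegral.integral_hasDerivAt_right (hf.intervalIntegrable a x)
        (hf.stronglyMeasurableAtFilter _ _) hf.continuousAt
    have hFcont : Continuous F := by
      have : Differentiable ℝ F := fun x => (hFderiv x).differentiableAt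
      exact this.continuous
    have hFa : F a = 0 := intervalIntegral.integral_same
    set φ : ℝ → ℝ := fun t => (m + 1 : ℝ) * F t ^ m * f t with hφdef
    have hφcont : Continuous φ := (continuous_const.mul (hFcont.pow m)).mul hf
    set ψ : ℝ → ℝ := fun t => g t * φ t with hψdef
    have hψcont : Continuous ψ := hg.mul hφcont
    have hFTC : ∀ x : ℝ, (∫ t in a..x, φ t) = F x ^ (m + 1) := by
      intro x
      have hd : ∀ t ∈ Set.uIcc a x, HasDerivAt (fun y => F y ^ (m + 1)) (φ t) t := by
        intro t _
        have h : HasDerivAt (fun y => F y ^ (m + 1)) _ t := (hFderiv t).pow (m + 1)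
        simpa [φ, Nat.add_sub_cancel, mul_comm] using h
      rw [intervalIntegral.integral_eq_sub_of_hasDerivAt hd (hφcont.intervalIntegrable _ _),
        hFa]
      simp
    -- the equivalence
    set e := MeasurableEquiv.piFinSuccAbove (fun _ : Fin (m + 2) => ℝ) 0 with hedef
    have hmp := MeasureTheory.volume_preserving_piFinSuccAbove (fun _ : Fin (m + 2) => ℝ) 0
    have hpre : Set.pi Set.univ (fun _ : Fin (m + 2) => Set.Icc a b)
        = e ⁻¹' (Set.Icc a b ×ˢ Set.pi Set.univ (fun _ : Fin (m + 1) => Set.Icc a b)) := by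
      ext s
      have hes : e s = (s 0, fun k : Fin (m + 1) => s ((0 : Fin (m + 2)).succAbove k)) := rfl
      simp only [Set.mem_pi, Set.mem_univ, true_implies, Set.mem_preimage, hes, Set.mem_prod]
      exact Fin.forall_iff_succAbove 0
    have heq : ∀ s : Fin (m + 2) → ℝ, g (⨆ j, s j) * ∏ j, f (s j)
        = f (e s).1 * (g (max (e s).1 (⨆ k, (e s).2 k)) * ∏ k, f ((e s).2 k)) := by
      intro s
      have h2 : (∏ j, f (s j)) = f (s 0) * ∏ k : Fin (m + 1), f (s k.succ) :=
        Fin.prod_univ_succ _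
      have he : e s = (s 0, fun k : Fin (m + 1) => s (Fin.succAbove 0 k)) := rfl
      rw [ciSup_fin_succ s, h2, he]
      simp only [Fin.succAbove_zero]
      ring
    rw [hpre, integral_congr_ae (Filter.Eventually.of_forall fun s => heq s),
      hmp.setIntegral_preimage_emb e.measurableEmbedding
        (fun p : ℝ × (Fin (m + 1) → ℝ) =>
          f p.1 * (g (max p.1 (⨆ k, p.2 k)) * ∏ k, f (p.2 k)))
        (Set.Icc a b ×ˢ Set.pi Set.univ (fun _ : Fin (m + 1) => Set.Icc a b))]
    have hcontG : Continuous (fun p : ℝ × (Fin (m + 1) → ℝ) =>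
        f p.1 * (g (max p.1 (⨆ k, p.2 k)) * ∏ k, f (p.2 k))) := by
      apply (hf.comp continuous_fst).mul
      apply Continuous.mul
      · exact hg.comp (continuous_fst.max (continuous_pi_ciSup.comp continuous_snd))
      · exact continuous_finset_prod _ fun k _ => hf.comp ((continuous_apply k).comp continuous_snd)
    have hcompact : IsCompact (Set.Icc a b ×ˢ Set.pi Set.univ (fun _ : Fin (m + 1) => Set.Icc a b)) :=
      isCompact_Icc.prod (isCompact_univ_pi fun _ => isCompact_Icc)
    rw [MeasureTheory.Measure.volume_eq_prod, setIntegral_prod _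
      (hcontG.continuousOn.integrableOn_compact hcompact)]
    -- pull out f x and use ih
    have hstep1 : ∀ x : ℝ, (∫ y in Set.pi Set.univ (fun _ : Fin (m + 1) => Set.Icc a b),
        f x * (g (max x (⨆ k, y k)) * ∏ k, f (y k)))
        = f x * ∫ t in a..b, g (max x t) * φ t := by
      intro x
      rw [MeasureTheory.integral_const_mul]
      congr 1
      exact ih (fun t => g (max x t)) (hg.comp (continuous_const.max continuous_id))
    rw [setIntegral_congr_fun measurableSet_Icc (fun x _ => hstep1 x)]
    -- split the inner integral at x
    have hsplit : ∀ x ∈ Set.Icc a b,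
        (∫ t in a..b, g (max x t) * φ t) = g x * F x ^ (m + 1) + ∫ t in x..b, ψ t := by
      intro x hx
      have h1 : IntervalIntegrable (fun t => g (max x t) * φ t) volume a x :=
        ((hg.comp (continuous_const.max continuous_id)).mul hφcont).intervalIntegrable _ _
      have h2 : IntervalIntegrable (fun t => g (max x t) * φ t) volume x b :=
        ((hg.comp (continuous_const.max continuous_id)).mul hφcont).intervalIntegrable _ _
      rw [← intervalIntegral.integral_add_adjacent_intervals h1 h2]
      congr 1
      · have hc : ∫ t in a..x, g (max x t) * φ t = ∫ t in a..x, g x * φ t := by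
          refine intervalIntegral.integral_congr fun t ht => ?_
          rw [Set.uIcc_of_le hx.1] at ht
          simp only [max_eq_left ht.2]
        rw [hc, intervalIntegral.integral_const_mul, hFTC x]
      · refine intervalIntegral.integral_congr fun t ht => ?_
        rw [Set.uIcc_of_le hx.2] at ht
        simp only [max_eq_right ht.1, hψdef]
    have hmain : (∫ x in Set.Icc a b, f x * ∫ t in a..b, g (max x t) * φ t)
        = ∫ x in a..b, f x * (g x * F x ^ (m + 1) + ∫ t in x..b, ψ t) := by
      rw [intervalIntegral.integral_of_le hab, ← MeasureTheory.integral_Icc_eq_integral_Ioc]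
      exact setIntegral_congr_fun measurableSet_Icc fun x hx => by rw [hsplit x hx]
    rw [hmain]
    -- properties of H
    set H : ℝ → ℝ := fun x => ∫ t in x..b, ψ t with hHdef
    have hHderiv : ∀ x : ℝ, HasDerivAt H (-ψ x) x := by
      intro x
      have hH' : H = fun x => -∫ t in b..x, ψ t := by
        funext y
        show (∫ t in y..b, ψ t) = -∫ t in b..y, ψ t
        rw [intervalIntegral.integral_symm y b, neg_neg]
      rw [hH']
      exact (intervalIntegral.integral_hasDerivAt_right (hψcont.intervalIntegrable b x)
        (hψcont.stronglyMeasurableAtFilter _ _) hψcont.continuousAt).neg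
    have hHcont : Continuous H := by
      have hd : Differentiable ℝ H := fun x => (hHderiv x).differentiableAt
      exact hd.continuous
    have hHb : H b = 0 := intervalIntegral.integral_same
    -- split the outer integral
    have hadd : (∫ x in a..b, f x * (g x * F x ^ (m + 1) + H x))
        = (∫ x in a..b, f x * (g x * F x ^ (m + 1))) + ∫ x in a..b, f x * H x := by
      rw [← intervalIntegral.integral_add (f := fun x => f x * (g x * F x ^ (m + 1)))
        (g := fun x => f x * H x)
        ((hf.mul (hg.mul (hFcont.pow (m + 1)))).intervalIntegrable _ _)
        ((hf.mul hHcont).intervalIntegrable _ _)]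
      apply intervalIntegral.integral_congr
      intro t _
      ring
    rw [hadd]
    -- integration by parts for the second piece
    have hibp : (∫ x in a..b, H x * f x)
        = H b * F b - H a * F a - ∫ x in a..b, -ψ x * F x :=
      intervalIntegral.integral_mul_deriv_eq_deriv_mul (fun x _ => hHderiv x)
        (fun x _ => hFderiv x) ((hψcont.neg).intervalIntegrable _ _)
        (hf.intervalIntegrable _ _)
    have hcomm : (∫ x in a..b, f x * H x) = ∫ x in a..b, ψ x * F x := by
      rw [show (∫ x in a..b, f x * H x) = ∫ x in a..b, H x * f x from
          intervalIntegral.integral_congr fun x _ => mul_comm _ _,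
        hibp, hHb, hFa]
      rw [show (∫ x in a..b, -ψ x * F x) = -∫ x in a..b, ψ x * F x by
        rw [← intervalIntegral.integral_neg]; apply intervalIntegral.integral_congr
        intro x _; ring]
      ring
    rw [hcomm, ← intervalIntegral.integral_add (f := fun x => f x * (g x * F x ^ (m + 1)))
      (g := fun x => ψ x * F x)
      ((hf.mul (hg.mul (hFcont.pow (m + 1)))).intervalIntegrable _ _)
      ((hψcont.mul hFcont).intervalIntegrable _ _)]
    apply intervalIntegral.integral_congr
    intro t _
    simp only [ψ, φ]
    ring

/-- For `n ≥ 2` i.i.d. signals with density `f` on `[a,b]`,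
`∫_{[a,b]^n} (∑_i max_{j≠i} s_j) ∏_j f(s_j) ds = n(n−1) ∫_a^b t F(t)^{n−2} f(t) dt`,
where `F(t) = ∫_a^t f`. Equivalently, the expectation of
`((n−1)/n)·(highest signal) + (1/n)·(second-highest signal)` equals
`(n−1) ∫_a^b t F(t)^{n−2} f(t) dt`. -/
theorem sum_max_others_expectation
    (n : ℕ) (hn : 2 ≤ n) (a b : ℝ) (hab : a < b)
    (f : ℝ → ℝ) (hfcont : ContinuousOn f (Set.Icc a b))
    (hfnonneg : ∀ t ∈ Set.Icc a b, 0 ≤ f t)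
    (hF1 : (∫ x in a..b, f x) = 1) :
    (∫ s in {s : Fin n → ℝ | ∀ j, s j ∈ Set.Icc a b},
        (∑ i : Fin n, ⨆ j : {j : Fin n // j ≠ i}, s j) * ∏ j, f (s j)) =
      (n : ℝ) * ((n : ℝ) - 1) *
        ∫ t in a..b, t * (∫ x in a..t, f x) ^ (n - 2) * f t := by
  obtain ⟨m, rfl⟩ : ∃ m, n = m + 2 := ⟨n - 2, by omega⟩
  -- replace `f` by a continuous extension to all of `ℝ`
  set f' : ℝ → ℝ := fun x => f (max a (min b x)) with hf'def
  have hmem : ∀ x : ℝ, max a (min b x) ∈ Set.Icc a b := fun x =>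
    ⟨le_max_left _ _, max_le hab.le (min_le_left _ _)⟩
  have hf'cont : Continuous f' :=
    hfcont.comp_continuous (continuous_const.max (continuous_const.min continuous_id)) hmem
  have hf'eq : ∀ x ∈ Set.Icc a b, f' x = f x := by
    intro x hx
    have h1 : min b x = x := min_eq_right hx.2
    have h2 : max a x = x := max_eq_right hx.1
    simp [f', h1, h2]
  have hFeq : ∀ t ∈ Set.Icc a b, (∫ x in a..t, f x) = ∫ x in a..t, f' x := by
    intro t ht
    refine intervalIntegral.integral_congr fun x hx => ?_
    rw [Set.uIcc_of_le ht.1] at hx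
    exact (hf'eq x ⟨hx.1, hx.2.trans ht.2⟩).symm
  have hF1' : (∫ x in a..b, f' x) = 1 := by
    rw [← hFeq b ⟨hab.le, le_refl b⟩]; exact hF1
  -- rewrite both sides in terms of `f'`
  have hset : {s : Fin (m + 2) → ℝ | ∀ j, s j ∈ Set.Icc a b}
      = Set.pi Set.univ (fun _ : Fin (m + 2) => Set.Icc a b) := by
    ext s; simp [Set.mem_pi, Pi.le_def, forall_and]
  have hRHS : (∫ t in a..b, t * (∫ x in a..t, f x) ^ (m + 2 - 2) * f t)
      = ∫ t in a..b, t * (∫ x in a..t, f' x) ^ m * f' t := by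
    refine intervalIntegral.integral_congr fun t ht => ?_
    rw [Set.uIcc_of_le hab.le] at ht
    rw [hFeq t ht, hf'eq t ht]
    norm_num
  have hLHS : (∫ s in {s : Fin (m + 2) → ℝ | ∀ j, s j ∈ Set.Icc a b},
        (∑ i : Fin (m + 2), ⨆ j : {j : Fin (m + 2) // j ≠ i}, s j) * ∏ j, f (s j))
      = ∫ s in Set.pi Set.univ (fun _ : Fin (m + 2) => Set.Icc a b),
        (∑ i : Fin (m + 2), ⨆ j : {j : Fin (m + 2) // j ≠ i}, s j) * ∏ j, f' (s j) := by
    rw [hset]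
    refine setIntegral_congr_fun (MeasurableSet.univ_pi fun _ => measurableSet_Icc)
      fun s hs => ?_
    rw [Set.mem_univ_pi] at hs
    congr 1
    exact Finset.prod_congr rfl fun j _ => (hf'eq _ (hs j)).symm
  rw [hLHS, hRHS]
  -- nonemptiness instances
  haveI hne : ∀ i : Fin (m + 2), Nonempty {j : Fin (m + 2) // j ≠ i} := fun i =>
    ⟨⟨i.succAbove 0, Fin.succAbove_ne i 0⟩⟩
  -- rewrite subtype sup via succAbove
  have hsup : ∀ (i : Fin (m + 2)) (s : Fin (m + 2) → ℝ),
      (⨆ j : {j : Fin (m + 2) // j ≠ i}, s j) = ⨆ k : Fin (m + 1), s (i.succAbove k) := by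
    intro i s
    apply le_antisymm
    · refine ciSup_le fun j => ?_
      obtain ⟨k, hk⟩ := Fin.exists_succAbove_eq j.2
      rw [← hk]
      exact le_ciSup ((Set.finite_range fun k' : Fin (m + 1) =>
        s (i.succAbove k')).bddAbove) k
    · refine ciSup_le fun k => ?_
      exact le_ciSup ((Set.finite_range fun j : {j : Fin (m + 2) // j ≠ i} => s j).bddAbove)
        (⟨i.succAbove k, Fin.succAbove_ne i k⟩ : {j : Fin (m + 2) // j ≠ i})
  -- exchange sum and integral
  have hintegr : ∀ i : Fin (m + 2), IntegrableOn
      (fun s : Fin (m + 2) → ℝ => (⨆ j : {j : Fin (m + 2) // j ≠ i}, s j) * ∏ j, f' (s j))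
      (Set.pi Set.univ (fun _ : Fin (m + 2) => Set.Icc a b)) := by
    intro i
    have hc : Continuous (fun s : Fin (m + 2) → ℝ =>
        (⨆ j : {j : Fin (m + 2) // j ≠ i}, s j) * ∏ j, f' (s j)) := by
      apply Continuous.mul
      · exact continuous_pi_ciSup.comp
          (continuous_pi fun j : {j : Fin (m + 2) // j ≠ i} => continuous_apply (j : Fin (m + 2)))
      · exact continuous_finset_prod _ fun j _ => hf'cont.comp (continuous_apply j)
    exact hc.continuousOn.integrableOn_compact (isCompact_univ_pi fun _ => isCompact_Icc)
  have hsum : (∫ s in Set.pi Set.univ (fun _ : Fin (m + 2) => Set.Icc a b),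
        (∑ i : Fin (m + 2), ⨆ j : {j : Fin (m + 2) // j ≠ i}, s j) * ∏ j, f' (s j))
      = ∑ i : Fin (m + 2), ∫ s in Set.pi Set.univ (fun _ : Fin (m + 2) => Set.Icc a b),
          (⨆ j : {j : Fin (m + 2) // j ≠ i}, s j) * ∏ j, f' (s j) := by
    rw [← MeasureTheory.integral_finset_sum _ fun i _ => hintegr i]
    refine integral_congr_ae (Filter.Eventually.of_forall fun s => ?_)
    simp only [Finset.sum_mul]
  rw [hsum]
  -- each summand
  have hterm : ∀ i : Fin (m + 2),
      (∫ s in Set.pi Set.univ (fun _ : Fin (m + 2) => Set.Icc a b),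
        (⨆ j : {j : Fin (m + 2) // j ≠ i}, s j) * ∏ j, f' (s j))
      = ∫ t in a..b, t * (((m : ℝ) + 1) * (∫ x in a..t, f' x) ^ m * f' t) := by
    intro i
    set e := MeasurableEquiv.piFinSuccAbove (fun _ : Fin (m + 2) => ℝ) i with hedef
    have hmp := MeasureTheory.volume_preserving_piFinSuccAbove (fun _ : Fin (m + 2) => ℝ) i
    have hpre : Set.pi Set.univ (fun _ : Fin (m + 2) => Set.Icc a b)
        = e ⁻¹' (Set.Icc a b ×ˢ Set.pi Set.univ (fun _ : Fin (m + 1) => Set.Icc a b)) := by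
      ext s
      have hes : e s = (s i, fun k : Fin (m + 1) => s (i.succAbove k)) := rfl
      simp only [Set.mem_pi, Set.mem_univ, true_implies, Set.mem_preimage, hes, Set.mem_prod]
      exact Fin.forall_iff_succAbove i
    have heq : ∀ s : Fin (m + 2) → ℝ,
        (⨆ j : {j : Fin (m + 2) // j ≠ i}, s j) * ∏ j, f' (s j)
        = f' (e s).1 * ((⨆ k, (e s).2 k) * ∏ k, f' ((e s).2 k)) := by
      intro s
      have hes : e s = (s i, fun k : Fin (m + 1) => s (i.succAbove k)) := rfl
      rw [hsup i s, Fin.prod_univ_succAbove (fun j => f' (s j)) i, hes]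
      ring
    rw [hpre, integral_congr_ae (Filter.Eventually.of_forall fun s => heq s),
      hmp.setIntegral_preimage_emb e.measurableEmbedding
        (fun p : ℝ × (Fin (m + 1) → ℝ) => f' p.1 * ((⨆ k, p.2 k) * ∏ k, f' (p.2 k)))
        (Set.Icc a b ×ˢ Set.pi Set.univ (fun _ : Fin (m + 1) => Set.Icc a b)),
      MeasureTheory.Measure.volume_eq_prod,
      setIntegral_prod_mul f' (fun y : Fin (m + 1) → ℝ => (⨆ k, y k) * ∏ k, f' (y k))]
    have h1 : (∫ x in Set.Icc a b, f' x) = 1 := by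
      rw [MeasureTheory.integral_Icc_eq_integral_Ioc, ← intervalIntegral.integral_of_le hab.le]
      exact hF1'
    rw [h1, one_mul]
    have := max_density f' hf'cont a b hab.le m id continuous_id
    simpa [id] using this
  rw [Finset.sum_congr rfl fun i _ => hterm i]
  rw [Finset.sum_const, Finset.card_univ, Fintype.card_fin, nsmul_eq_mul]
  have hpull : (∫ t in a..b, t * (((m : ℝ) + 1) * (∫ x in a..t, f' x) ^ m * f' t))
      = ((m : ℝ) + 1) * ∫ t in a..b, t * (∫ x in a..t, f' x) ^ m * f' t := by
    rw [← intervalIntegral.integral_const_mul]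
    exact intervalIntegral.integral_congr fun t _ => by ring
  rw [hpull]
  push_cast
  ring
end
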